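/- Let β_{ij} = β_{ji} satisfy the Darboux–Egoroff system and let h_i be the associated Lamé coefficients. Then the linear system (depending on a parameter λ) ∂_j Ψ_i = β_{ij} Ψ_j (i ≠ j), ∂_i Ψ_i = λΨ_i − Σ_{k≠i} β_{ik} Ψ_k for vector-valued functions Ψ_i is compatible: mixed second partials of Ψ_i computed via the system agree for every λ. -/
import Mathlib


open scoped BigOperators

/-- Partial derivative `∂f/∂u^i` at `x`. -/
noncomputable def pd {n : ℕ} (i : Fin n) (f : (Fin n → ℝ) → ℝ) (x : Fin n → ℝ) : ℝ :=
  fderiv ℝ f x (Pi.single i 1)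


/-- The connection matrix `B_j(λ)` of the system `∂_j Ψ = B_j Ψ` with spectral
    parameter `λ`: row `j` has `λ` on the diagonal and `-β_{jm}` in columns `m ≠ j`;
    row `i ≠ j` has entry `β_{ij}` in column `j`. -/
noncomputable def psiMatrix {n : ℕ} (β : Fin n → Fin n → (Fin n → ℝ) → ℝ) (lam : ℝ)
    (j : Fin n) (x : Fin n → ℝ) : Matrix (Fin n) (Fin n) ℝ :=
  fun i m => if i = j then (if m = j then lam else -β j m x) else (if m = j then β i j x else 0)

lemma pd_const' {n : ℕ} (i : Fin n) (c : ℝ) (x : Fin n → ℝ) : pd i (fun _ => c) x = 0 := by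
  simp [pd]

lemma pd_neg' {n : ℕ} (i : Fin n) (f : (Fin n → ℝ) → ℝ) (x : Fin n → ℝ) :
    pd i (fun y => -f y) x = -pd i f x := by
  simp [pd, fderiv_neg]

/-- If `β_{ij} = β_{ji}` satisfies the Darboux–Egoroff system on an open set `U`, then
    for every `λ` the linear system `∂_j Ψ_i = β_{ij} Ψ_j` (i ≠ j),
    `∂_i Ψ_i = λ Ψ_i - ∑_{k≠i} β_{ik} Ψ_k` is compatible:
    `∂_k B_j(λ) + B_j(λ) B_k(λ)` is symmetric in `j, k` on `U`. -/
theorem psi_system_compatible {n : ℕ} (U : Set (Fin n → ℝ)) (hU : IsOpen U)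
    (β : Fin n → Fin n → (Fin n → ℝ) → ℝ)
    (hβ : ∀ i j, i ≠ j → ContDiffOn ℝ (⊤ : ℕ∞) (β i j) U)
    (hβsymm : ∀ i j x, i ≠ j → β i j x = β j i x)
    (hDE₁ : ∀ i j k, i ≠ j → j ≠ k → i ≠ k → ∀ x ∈ U, pd k (β i j) x = β i k x * β k j x)
    (hDE₂ : ∀ i j, i ≠ j → ∀ x ∈ U, ∑ m, pd m (β i j) x = 0) :
    ∀ (lam : ℝ), ∀ x ∈ U, ∀ j k i m : Fin n,
      pd k (fun x => psiMatrix β lam j x i m) x +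
        (psiMatrix β lam j x * psiMatrix β lam k x) i m =
      pd j (fun x => psiMatrix β lam k x i m) x +
        (psiMatrix β lam k x * psiMatrix β lam j x) i m := by
  intro lam x hx j k i m
  rcases eq_or_ne j k with rfl | hjk
  · rfl
  have hkj : k ≠ j := hjk.symm
  have hd1 : ∀ a b c : Fin n, a ≠ b → c ≠ a → c ≠ b → pd c (β a b) x = β a c x * β c b x :=
    fun a b c hab hca hcb => hDE₁ a b c hab hcb.symm hca.symm x hx
  have key : ∀ a b : Fin n, a ≠ b →
      pd a (β a b) x + pd b (β a b) x
        + ∑ l ∈ (Finset.univ.erase a).erase b, β a l x * β l b x = 0 := by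
    intro a b hab
    have h2 := hDE₂ a b hab x hx
    have hbmem : b ∈ Finset.univ.erase a :=
      Finset.mem_erase.mpr ⟨hab.symm, Finset.mem_univ b⟩
    rw [← Finset.add_sum_erase _ _ (Finset.mem_univ a),
        ← Finset.add_sum_erase _ _ hbmem] at h2
    have hS : ∑ l ∈ (Finset.univ.erase a).erase b, pd l (β a b) x
        = ∑ l ∈ (Finset.univ.erase a).erase b, β a l x * β l b x := by
      refine Finset.sum_congr rfl fun l hl => ?_
      rw [Finset.mem_erase, Finset.mem_erase] at hl
      exact hd1 a b l hab hl.2.1 hl.1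
    rw [hS] at h2
    linarith
  -- the key "row" sum: ∑_l (B_a)_{a l} (B_b)_{l b} for a ≠ b
  have hard : ∀ a b : Fin n, a ≠ b →
      ∑ l, (if l = a then lam else -β a l x) * (if l = b then lam else β l b x)
        = -∑ l ∈ (Finset.univ.erase a).erase b, β a l x * β l b x := by
    intro a b hab
    have hbmem : b ∈ Finset.univ.erase a :=
      Finset.mem_erase.mpr ⟨hab.symm, Finset.mem_univ b⟩
    rw [← Finset.add_sum_erase _ _ (Finset.mem_univ a),
        ← Finset.add_sum_erase _ _ hbmem]
    have hS : ∑ l ∈ (Finset.univ.erase a).erase b,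
        (if l = a then lam else -β a l x) * (if l = b then lam else β l b x)
        = ∑ l ∈ (Finset.univ.erase a).erase b, -(β a l x * β l b x) := by
      refine Finset.sum_congr rfl fun l hl => ?_
      rw [Finset.mem_erase, Finset.mem_erase] at hl
      rw [if_neg hl.2.1, if_neg hl.1]
      ring
    rw [hS, Finset.sum_neg_distrib]
    rw [if_pos rfl, if_neg hab, if_pos rfl, if_neg hab.symm]
    ring
  simp only [psiMatrix, Matrix.mul_apply]
  by_cases hij : i = j
  · by_cases hmj : m = j
    · -- i = j, m = j
      have hmk : ¬ m = k := by rw [hmj]; exact hjk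
      simp only [hij, hmj, hmk, if_neg hjk, if_neg hkj, ite_true, ite_false,
        eq_self_iff_true, if_true, pd_const']
      have h1 : ∑ l, (if l = j then lam else -β j l x) * (if l = k then -β k j x else 0)
          = β j k x * β k j x := by
        rw [Finset.sum_eq_single_of_mem k (Finset.mem_univ k)
          (fun b _ hb => by simp [hb])]
        rw [if_neg hkj, if_pos rfl]
        ring
      have h2 : ∑ l, (if l = k then β j k x else 0) * (if l = j then lam else β l j x)
          = β j k x * β k j x := by
        rw [Finset.sum_eq_single_of_mem k (Finset.mem_univ k)
          (fun b _ hb => by simp [hb])]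
        rw [if_pos rfl, if_neg hkj]
      rw [h1, h2]
    · by_cases hmk : m = k
      · -- i = j, m = k : the hard case
        simp only [hij, hmj, hmk, if_neg hjk, if_neg hkj, ite_true, ite_false,
          eq_self_iff_true, if_true, pd_neg']
        have e1 : pd j (fun y => β j k y) x = pd j (β j k) x := rfl
        have e2 : pd k (fun y => β j k y) x = pd k (β j k) x := rfl
        have h2 : ∑ l, (if l = k then β j k x else 0) * (if l = j then -β j k x else 0)
            = 0 := by
          refine Finset.sum_eq_zero fun b _ => ?_
          by_cases hb : b = k
          · rw [if_pos hb, if_neg (by rw [hb]; exact hkj), mul_zero]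
          · rw [if_neg hb, zero_mul]
        rw [hard j k hjk, h2, e1, e2]
        have := key j k hjk
        linarith
      · -- i = j, m ∉ {j,k}
        simp only [hij, hmj, hmk, if_neg hjk, if_neg hkj, ite_true, ite_false,
          eq_self_iff_true, if_true, pd_neg', pd_const']
        have h1 : ∑ l, (if l = j then lam else -β j l x) * (if l = k then -β k m x else 0)
            = β j k x * β k m x := by
          rw [Finset.sum_eq_single_of_mem k (Finset.mem_univ k)
            (fun b _ hb => by simp [hb])]
          rw [if_neg hkj, if_pos rfl]
          ring
        have h2 : ∑ l, (if l = k then β j k x else 0) * (if l = j then -β j m x else 0)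
            = 0 := by
          refine Finset.sum_eq_zero fun b _ => ?_
          by_cases hb : b = k
          · rw [if_pos hb, if_neg (by rw [hb]; exact hkj), mul_zero]
          · rw [if_neg hb, zero_mul]
        rw [h1, h2]
        have e2 : pd k (fun y => β j m y) x = pd k (β j m) x := rfl
        rw [e2, hd1 j m k (fun h => hmj h.symm) hkj (fun h => hmk h.symm)]
        ring
  · by_cases hik : i = k
    · by_cases hmj : m = j
      · -- i = k, m = j : mirror hard case
        have hmk : ¬ m = k := by rw [hmj]; exact hjk
        simp only [hij, hik, hmj, hmk, if_neg hjk, if_neg hkj, ite_true, ite_false,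
          eq_self_iff_true, if_true, pd_neg']
        have e1 : pd k (fun y => β k j y) x = pd k (β k j) x := rfl
        have e2 : pd j (fun y => β k j y) x = pd j (β k j) x := rfl
        have h1 : ∑ l, (if l = j then β k j x else 0) * (if l = k then -β k j x else 0)
            = 0 := by
          refine Finset.sum_eq_zero fun b _ => ?_
          by_cases hb : b = j
          · rw [if_pos hb, if_neg (by rw [hb]; exact hjk), mul_zero]
          · rw [if_neg hb, zero_mul]
        rw [hard k j hkj, h1, e1, e2]
        have := key k j hkj
        linarith
      · by_cases hmk : m = k
        · -- i = k, m = k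
          simp only [hij, hik, hmj, hmk, if_neg hjk, if_neg hkj, ite_true, ite_false,
            eq_self_iff_true, if_true, pd_const']
          have h1 : ∑ l, (if l = j then β k j x else 0) * (if l = k then lam else β l k x)
              = β k j x * β j k x := by
            rw [Finset.sum_eq_single_of_mem j (Finset.mem_univ j)
              (fun b _ hb => by simp [hb])]
            rw [if_pos rfl, if_neg hjk]
          have h2 : ∑ l, (if l = k then lam else -β k l x) * (if l = j then -β j k x else 0)
              = β k j x * β j k x := by
            rw [Finset.sum_eq_single_of_mem j (Finset.mem_univ j)
              (fun b _ hb => by simp [hb])]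
            rw [if_neg hjk, if_pos rfl]
            rw [hβsymm k j x hkj]
            ring
          rw [h1, h2]
        · -- i = k, m ∉ {j,k}
          simp only [hij, hik, hmj, hmk, if_neg hjk, if_neg hkj, ite_true, ite_false,
            eq_self_iff_true, if_true, pd_neg', pd_const']
          have h1 : ∑ l, (if l = j then β k j x else 0) * (if l = k then -β k m x else 0)
              = 0 := by
            refine Finset.sum_eq_zero fun b _ => ?_
            by_cases hb : b = j
            · rw [if_pos hb, if_neg (by rw [hb]; exact hjk), mul_zero]
            · rw [if_neg hb, zero_mul]
          have h2 : ∑ l, (if l = k then lam else -β k l x) * (if l = j then -β j m x else 0)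
              = β k j x * β j m x := by
            rw [Finset.sum_eq_single_of_mem j (Finset.mem_univ j)
              (fun b _ hb => by simp [hb])]
            rw [if_neg hjk, if_pos rfl]
            ring
          rw [h1, h2]
          have e2 : pd j (fun y => β k m y) x = pd j (β k m) x := rfl
          rw [e2, hd1 k m j (fun h => hmk h.symm) hjk (fun h => hmj h.symm)]
          rw [hβsymm k j x hkj]
          ring
    · by_cases hmj : m = j
      · -- i ∉ {j,k}, m = j
        have hmk : ¬ m = k := by rw [hmj]; exact hjk
        simp only [hij, hik, hmj, hmk, if_neg hjk, if_neg hkj, ite_true, ite_false,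
          eq_self_iff_true, if_true, pd_const']
        have h1 : ∑ l, (if l = j then β i j x else 0) * (if l = k then -β k j x else 0)
            = 0 := by
          refine Finset.sum_eq_zero fun b _ => ?_
          by_cases hb : b = j
          · rw [if_pos hb, if_neg (by rw [hb]; exact hjk), mul_zero]
          · rw [if_neg hb, zero_mul]
        have h2 : ∑ l, (if l = k then β i k x else 0) * (if l = j then lam else β l j x)
            = β i k x * β k j x := by
          rw [Finset.sum_eq_single_of_mem k (Finset.mem_univ k)
            (fun b _ hb => by simp [hb])]
          rw [if_pos rfl, if_neg hkj]
        rw [h1, h2]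
        have e1 : pd k (fun y => β i j y) x = pd k (β i j) x := rfl
        rw [e1, hd1 i j k hij (fun h => hik h.symm) hkj]
        ring
      · by_cases hmk : m = k
        · -- i ∉ {j,k}, m = k
          simp only [hij, hik, hmj, hmk, if_neg hjk, if_neg hkj, ite_true, ite_false,
            eq_self_iff_true, if_true, pd_const']
          have h1 : ∑ l, (if l = j then β i j x else 0) * (if l = k then lam else β l k x)
              = β i j x * β j k x := by
            rw [Finset.sum_eq_single_of_mem j (Finset.mem_univ j)
              (fun b _ hb => by simp [hb])]
            rw [if_pos rfl, if_neg hjk]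
          have h2 : ∑ l, (if l = k then β i k x else 0) * (if l = j then -β j k x else 0)
              = 0 := by
            refine Finset.sum_eq_zero fun b _ => ?_
            by_cases hb : b = k
            · rw [if_pos hb, if_neg (by rw [hb]; exact hkj), mul_zero]
            · rw [if_neg hb, zero_mul]
          rw [h1, h2]
          have e1 : pd j (fun y => β i k y) x = pd j (β i k) x := rfl
          rw [e1, hd1 i k j hik (fun h => hij h.symm) hjk]
          ring
        · -- i ∉ {j,k}, m ∉ {j,k}
          simp only [hij, hik, hmj, hmk, if_neg hjk, if_neg hkj, ite_true, ite_false,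
            eq_self_iff_true, if_true, pd_const']
          have h1 : ∑ l, (if l = j then β i j x else 0) * (if l = k then -β k m x else 0)
              = 0 := by
            refine Finset.sum_eq_zero fun b _ => ?_
            by_cases hb : b = j
            · rw [if_pos hb, if_neg (by rw [hb]; exact hjk), mul_zero]
            · rw [if_neg hb, zero_mul]
          have h2 : ∑ l, (if l = k then β i k x else 0) * (if l = j then -β j m x else 0)
              = 0 := by
            refine Finset.sum_eq_zero fun b _ => ?_
            by_cases hb : b = k
            · rw [if_pos hb, if_neg (by rw [hb]; exact hkj), mul_zero]
            · rw [if_neg hb, zero_mul]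
          rw [h1, h2]
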